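/- arXiv:2501.16696 — 7 statements merged into one kernel-verified Lean document; each statement's English description precedes it below -/
import Mathlib

section
/- For 0 < x < 1, it holds that x + x³/6 < arcsin x < x + (π/2 − 1)·x³. -/
open Real

namespace ArcsinBoundAux

open Set

lemma qpos (b u : ℝ) (hb1 : 1.712388 < b) (hb2 : b < 1.7123895)
    (hu0 : 0 < u) (hu : u ≤ 0.819025) : 1 < (1 - u) * (1 + b * u) ^ 2 := by
  nlinarith [mul_nonneg (sub_nonneg.2 hu) (sub_nonneg.2 hb1.le), sq_nonneg (u - 0.819025),
    sq_nonneg (b - 1.712388), mul_pos hu0 hu0, mul_nonneg (sub_nonneg.2 hu) hu0.le,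
    mul_nonneg (mul_nonneg (sub_nonneg.2 hu) hu0.le) hu0.le]

lemma qneg (b u : ℝ) (hb1 : 1.712388 < b) (hb2 : b < 1.7123895)
    (hu : 0.839056 ≤ u) (hu1 : u < 1) : (1 - u) * (1 + b * u) ^ 2 < 1 := by
  have h1 : (0:ℝ) ≤ u - 0.839056 := by linarith
  have h2 : (0:ℝ) ≤ b - 1.712388 := by linarith
  have h3 : (0:ℝ) ≤ 1.7123895 - b := by linarith
  nlinarith [mul_nonneg h1 h2, mul_nonneg h1 h3, mul_nonneg (mul_nonneg h1 h1) h2,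
    mul_nonneg (mul_nonneg h1 h1) h3, mul_nonneg h1 h1, mul_nonneg h2 h3,
    mul_nonneg (mul_nonneg h1 h2) h3, sq_nonneg (b*u - 1.43672)]

lemma sin13 : (0.916:ℝ) < Real.sin 1.3 := by
  have habs : |(0.65:ℝ)| = 0.65 := by rw [abs_of_pos]; norm_num
  have hs := Real.sin_bound (x := 0.65) (by rw [habs]; norm_num)
  have hc := Real.cos_bound (x := 0.65) (by rw [habs]; norm_num)
  rw [habs, abs_le] at hs hc
  have h1 : Real.sin 0.65 ≥ 0.594 := by nlinarith [hs.1]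
  have h2 : Real.cos 0.65 ≥ 0.779 := by nlinarith [hc.1]
  have h13 : (1.3:ℝ) = 2 * 0.65 := by norm_num
  rw [h13, Real.sin_two_mul]
  nlinarith [h1, h2, mul_nonneg (by linarith : (0:ℝ) ≤ Real.sin 0.65 - 0.594)
    (by linarith : (0:ℝ) ≤ Real.cos 0.65 - 0.779)]

lemma hb1 : (1.712388:ℝ) < 3 * (π / 2 - 1) := by
  have := Real.pi_gt_d6; nlinarith

lemma hb2 : 3 * (π / 2 - 1) < 1.7123895 := by
  have := Real.pi_lt_d6; nlinarith

/-- derivative of the upper comparison function -/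
lemma gderiv (y : ℝ) (hy1 : -1 < y) (hy2 : y < 1) :
    HasDerivAt (fun y : ℝ => y + (π / 2 - 1) * y ^ 3 - Real.arcsin y)
      (1 + (π / 2 - 1) * ((3:ℕ) * y ^ 2) - 1 / Real.sqrt (1 - y ^ 2)) y :=
  ((hasDerivAt_id y).add (((hasDerivAt_pow 3 y)).const_mul (π / 2 - 1))).sub
    (Real.hasDerivAt_arcsin (by linarith) (by linarith))

lemma gcont : Continuous (fun y : ℝ => y + (π / 2 - 1) * y ^ 3 - Real.arcsin y) := by
  have : Continuous (fun y : ℝ => y + (π / 2 - 1) * y ^ 3) := by continuity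
  exact this.sub Real.continuous_arcsin

lemma sqrt_facts (y : ℝ) (hy1 : -1 < y) (hy2 : y < 1) :
    0 < Real.sqrt (1 - y ^ 2) ∧ Real.sqrt (1 - y ^ 2) ^ 2 = 1 - y ^ 2 := by
  have h1 : 0 < 1 - y ^ 2 := by nlinarith
  exact ⟨Real.sqrt_pos.2 h1, Real.sq_sqrt h1.le⟩

end ArcsinBoundAux

open ArcsinBoundAux Set in
set_option maxHeartbeats 1000000 in
theorem arcsin_two_sided_bound (x : ℝ) (hx0 : 0 < x) (hx1 : x < 1) :
    x + x ^ 3 / 6 < Real.arcsin x ∧ Real.arcsin x < x + (π / 2 - 1) * x ^ 3 := by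
  constructor
  · -- lower bound
    have hmono : StrictMonoOn (fun y : ℝ => Real.arcsin y - (y + y ^ 3 / 6)) (Icc 0 x) := by
      apply strictMonoOn_of_deriv_pos (convex_Icc 0 x)
      · exact (Real.continuous_arcsin.sub (by continuity)).continuousOn
      · intro y hy
        rw [interior_Icc, mem_Ioo] at hy
        have hy0 : 0 < y := hy.1
        have hy1 : y < 1 := hy.2.trans hx1
        have hd : HasDerivAt (fun y : ℝ => Real.arcsin y - (y + y ^ 3 / 6))
            (1 / Real.sqrt (1 - y ^ 2) - (1 + (3 : ℕ) * y ^ 2 / 6)) y :=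
          (Real.hasDerivAt_arcsin (by linarith) (by linarith)).sub
            ((hasDerivAt_id y).add (((hasDerivAt_pow 3 y)).div_const 6))
        rw [hd.deriv]
        obtain ⟨hs0, hs2⟩ := sqrt_facts y (by linarith) hy1
        set s := Real.sqrt (1 - y ^ 2) with hs
        have hA2 : (s * (1 + (3 : ℕ) * y ^ 2 / 6)) ^ 2 < 1 := by
          have hexp : (s * (1 + (3 : ℕ) * y ^ 2 / 6)) ^ 2 = s ^ 2 * (1 + 3 * y ^ 2 / 6) ^ 2 := by
            push_cast; ring
          rw [hexp, hs2]
          nlinarith [pow_pos hy0 4, pow_pos hy0 6]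
        have key : s * (1 + (3 : ℕ) * y ^ 2 / 6) < 1 := by
          nlinarith [hA2, sq_nonneg (s * (1 + (3 : ℕ) * y ^ 2 / 6) - 1)]
        have : (1 + (3 : ℕ) * y ^ 2 / 6) < 1 / s :=
          (lt_div_iff₀ hs0).2 (by linarith [mul_comm s (1 + (3:ℕ) * y ^ 2 / 6)])
        linarith
    have h0 : (0:ℝ) ∈ Icc (0:ℝ) x := ⟨le_refl _, hx0.le⟩
    have hx : x ∈ Icc (0:ℝ) x := ⟨hx0.le, le_refl _⟩
    have := hmono h0 hx hx0
    simp only [Real.arcsin_zero] at this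
    linarith
  · -- upper bound
    set g := fun y : ℝ => y + (π / 2 - 1) * y ^ 3 - Real.arcsin y with hg
    suffices h : 0 < g x by simpa [hg] using h
    rcases le_or_gt x 0.905 with hA | hA
    · -- monotone increasing regime
      have hmono : StrictMonoOn g (Icc 0 x) := by
        apply strictMonoOn_of_deriv_pos (convex_Icc 0 x)
        · exact gcont.continuousOn
        · intro y hy
          rw [interior_Icc, mem_Ioo] at hy
          have hy0 : 0 < y := hy.1
          have hy1 : y < 1 := by linarith [hy.2]
          have hyA : y < 0.905 := lt_of_lt_of_le hy.2 hA
          rw [(gderiv y (by linarith) hy1).deriv]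
          obtain ⟨hs0, hs2⟩ := sqrt_facts y (by linarith) hy1
          set s := Real.sqrt (1 - y ^ 2) with hs
          have ht0 : (0:ℝ) < 1 + (π / 2 - 1) * ((3:ℕ) * y ^ 2) := by
            have := hb1; push_cast; nlinarith [sq_nonneg y]
          have hA2 : 1 < (s * (1 + (π / 2 - 1) * ((3:ℕ) * y ^ 2))) ^ 2 := by
            have hexp : (s * (1 + (π / 2 - 1) * ((3:ℕ) * y ^ 2))) ^ 2
                = s ^ 2 * (1 + (3 * (π / 2 - 1)) * y ^ 2) ^ 2 := by push_cast; ring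
            rw [hexp, hs2]
            exact qpos _ _ hb1 hb2 (by positivity) (by nlinarith)
          have key : 1 < s * (1 + (π / 2 - 1) * ((3:ℕ) * y ^ 2)) := by
            nlinarith [mul_pos hs0 ht0]
          have : 1 / s < 1 + (π / 2 - 1) * ((3:ℕ) * y ^ 2) :=
            (div_lt_iff₀ hs0).2 (by linarith [mul_comm s (1 + (π / 2 - 1) * ((3:ℕ) * y ^ 2))])
          linarith
      have h0 : (0:ℝ) ∈ Icc (0:ℝ) x := ⟨le_refl _, hx0.le⟩
      have hxm : x ∈ Icc (0:ℝ) x := ⟨hx0.le, le_refl _⟩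
      have := hmono h0 hxm hx0
      simpa [hg, Real.arcsin_zero] using this
    · rcases lt_or_ge x 0.916 with hB | hB
      · -- middle regime : numeric estimate
        have hpi1 := Real.pi_gt_d6
        have harc : Real.arcsin x ≤ 1.3 := by
          rw [Real.arcsin_le_iff_le_sin ⟨by linarith, hx1.le⟩ ⟨by linarith, by linarith⟩]
          linarith [sin13]
        have hx3 : (0.905:ℝ) ^ 3 < x ^ 3 := by gcongr <;> norm_num
        have hval : (1.3:ℝ) < x + (π / 2 - 1) * x ^ 3 := by nlinarith
        simp only [hg]
        linarith
      · -- antitone regime near 1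
        have hanti : StrictAntiOn g (Icc x 1) := by
          apply strictAntiOn_of_deriv_neg (convex_Icc x 1)
          · exact gcont.continuousOn
          · intro y hy
            rw [interior_Icc, mem_Ioo] at hy
            have hy0 : 0 < y := lt_trans hx0 hy.1
            have hy1 : y < 1 := hy.2
            have hyB : 0.916 < y := lt_of_le_of_lt hB hy.1
            rw [(gderiv y (by linarith) hy1).deriv]
            obtain ⟨hs0, hs2⟩ := sqrt_facts y (by linarith) hy1
            set s := Real.sqrt (1 - y ^ 2) with hs
            have hA2 : (s * (1 + (π / 2 - 1) * ((3:ℕ) * y ^ 2))) ^ 2 < 1 := by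
              have hexp : (s * (1 + (π / 2 - 1) * ((3:ℕ) * y ^ 2))) ^ 2
                  = s ^ 2 * (1 + (3 * (π / 2 - 1)) * y ^ 2) ^ 2 := by push_cast; ring
              rw [hexp, hs2]
              exact qneg _ _ hb1 hb2 (by nlinarith) (by nlinarith)
            have key : s * (1 + (π / 2 - 1) * ((3:ℕ) * y ^ 2)) < 1 := by
              nlinarith [hA2, sq_nonneg (s * (1 + (π / 2 - 1) * ((3:ℕ) * y ^ 2)) - 1)]
            have : (1 + (π / 2 - 1) * ((3:ℕ) * y ^ 2)) < 1 / s :=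
              (lt_div_iff₀ hs0).2 (by linarith [mul_comm s (1 + (π / 2 - 1) * ((3:ℕ) * y ^ 2))])
            linarith
        have hxm : x ∈ Icc x (1:ℝ) := ⟨le_refl _, hx1.le⟩
        have h1m : (1:ℝ) ∈ Icc x (1:ℝ) := ⟨hx1.le, le_refl _⟩
        have := hanti hxm h1m hx1
        have hg1 : g 1 = 0 := by simp [hg, Real.arcsin_one]
        rw [hg1] at this
        exact this
end

section
/- Let k > 0, h > 0 with 0 < kh/2 < 1, and define k^h := (2/h)·arcsin(kh/2). Then (1/24)·k³h² < k^h − k < ((π−2)/8)·k³h². -/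
/-!
With `x = kh/2 ∈ (0, 1)` both bounds are `x + x³/6 < arcsin x` and
`arcsin x - x < (π/2 - 1) x³`, scaled by `2/h`. Write `t = √(1 - x²)`.
The first holds because the derivative of `arcsin x - x - x³/6` is
`1/t - (3 - t²)/2 = (1 - t)² (2 + t) / (2t) > 0`.
For the second, `(arcsin x - x)/x³` is strictly increasing on `(0, 1]`, where it ends at
`π/2 - 1`: its derivative has the sign of `x/t + 2x - 3 arcsin x`, which vanishes at `0`
and has derivative `(1 - t)² (1 + 2t) / t³ > 0`.
-/

open Real Set

lemma strictMonoOn_arcsin_sub_add_cube_div_six :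
    StrictMonoOn (fun x => arcsin x - (x + x ^ 3 / 6)) (Icc 0 1) := by
  refine strictMonoOn_of_deriv_pos (convex_Icc 0 1) (by fun_prop) fun y hy => ?_
  rw [interior_Icc] at hy
  obtain ⟨hy0, hy1⟩ := hy
  have hd : HasDerivAt (fun x => arcsin x - (x + x ^ 3 / 6))
      (1 / √(1 - y ^ 2) - (1 + (3 : ℕ) * y ^ 2 / 6)) y :=
    (hasDerivAt_arcsin (by linarith) hy1.ne).sub
      ((hasDerivAt_id' y).add ((hasDerivAt_pow 3 y).div_const 6))
  rw [hd.deriv]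
  set t := √(1 - y ^ 2)
  have ht : 0 < t := sqrt_pos.mpr (by nlinarith)
  have hy2 : y ^ 2 = 1 - t ^ 2 := by rw [sq_sqrt (by nlinarith)]; ring
  have ht1 : t < 1 := by nlinarith
  rw [sub_pos, lt_div_iff₀ ht, hy2]
  push_cast
  nlinarith [mul_pos (pow_pos (sub_pos.2 ht1) 2) (by linarith : 0 < 2 + t)]

lemma add_cube_div_six_lt_arcsin {x : ℝ} (hx0 : 0 < x) (hx1 : x ≤ 1) :
    x + x ^ 3 / 6 < arcsin x := by
  have := strictMonoOn_arcsin_sub_add_cube_div_six ⟨le_rfl, zero_le_one⟩ ⟨hx0.le, hx1⟩ hx0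
  simp only [arcsin_zero] at this
  linarith

lemma hasDerivAt_div_sqrt_one_sub_sq {x : ℝ} (hx : x ^ 2 < 1) :
    HasDerivAt (fun y => y / √(1 - y ^ 2)) (1 / √(1 - x ^ 2) ^ 3) x := by
  have hpos : 0 < 1 - x ^ 2 := by linarith
  have ht : 0 < √(1 - x ^ 2) := sqrt_pos.mpr hpos
  refine ((hasDerivAt_id' x).div (((hasDerivAt_pow 2 x).const_sub 1).sqrt hpos.ne')
    ht.ne').congr_deriv ?_
  field_simp
  push_cast
  linear_combination 2 * sq_sqrt hpos.le

lemma strictMonoOn_div_sqrt_one_sub_sq_add_two_mul_sub_three_mul_arcsin :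
    StrictMonoOn (fun x => x / √(1 - x ^ 2) + 2 * x - 3 * arcsin x) (Ico 0 1) := by
  have hd : ∀ y ∈ Ico (0 : ℝ) 1, HasDerivAt (fun x => x / √(1 - x ^ 2) + 2 * x - 3 * arcsin x)
      (1 / √(1 - y ^ 2) ^ 3 + 2 * 1 - 3 * (1 / √(1 - y ^ 2))) y := fun y ⟨hy0, hy1⟩ =>
    ((hasDerivAt_div_sqrt_one_sub_sq (by nlinarith)).add ((hasDerivAt_id' y).const_mul 2)).sub
      ((hasDerivAt_arcsin (by linarith) hy1.ne).const_mul 3)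
  refine strictMonoOn_of_deriv_pos (convex_Ico 0 1)
    (fun y hy => (hd y hy).continuousAt.continuousWithinAt) fun y hy => ?_
  rw [interior_Ico] at hy
  rw [(hd y (Ioo_subset_Ico_self hy)).deriv]
  obtain ⟨hy0, hy1⟩ := hy
  set t := √(1 - y ^ 2)
  have ht : 0 < t := sqrt_pos.mpr (by nlinarith)
  have ht1 : t < 1 := by nlinarith [sq_sqrt (by nlinarith : (0 : ℝ) ≤ 1 - y ^ 2)]
  have : 1 / t ^ 3 + 2 * 1 - 3 * (1 / t) = (1 - t) ^ 2 * (1 + 2 * t) / t ^ 3 := by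
    field_simp
    ring
  rw [this]
  have : 0 < 1 - t := sub_pos.2 ht1
  positivity

lemma three_mul_arcsin_lt {x : ℝ} (hx0 : 0 < x) (hx1 : x < 1) :
    3 * arcsin x < x / √(1 - x ^ 2) + 2 * x := by
  have := strictMonoOn_div_sqrt_one_sub_sq_add_two_mul_sub_three_mul_arcsin
    ⟨le_rfl, zero_lt_one⟩ ⟨hx0.le, hx1⟩ hx0
  norm_num at this
  linarith

lemma strictMonoOn_arcsin_sub_self_div_cube :
    StrictMonoOn (fun x => (arcsin x - x) / x ^ 3) (Ioc 0 1) := by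
  refine strictMonoOn_of_deriv_pos (convex_Ioc 0 1)
    ((continuous_arcsin.sub continuous_id).continuousOn.div (continuousOn_pow 3)
      fun y hy => (pow_pos hy.1 3).ne') fun y hy => ?_
  rw [interior_Ioc] at hy
  obtain ⟨hy0, hy1⟩ := hy
  have hd : HasDerivAt (fun x => (arcsin x - x) / x ^ 3)
      (((1 / √(1 - y ^ 2) - 1) * y ^ 3 - (arcsin y - y) * ((3 : ℕ) * y ^ (3 - 1))) / (y ^ 3) ^ 2)
      y :=
    ((hasDerivAt_arcsin (by linarith) hy1.ne).sub (hasDerivAt_id' y)).div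
      (hasDerivAt_pow 3 y) (pow_pos hy0 3).ne'
  have hnum : (1 / √(1 - y ^ 2) - 1) * y ^ 3 - (arcsin y - y) * ((3 : ℕ) * y ^ (3 - 1)) =
      y ^ 2 * (y / √(1 - y ^ 2) + 2 * y - 3 * arcsin y) := by
    push_cast
    ring
  rw [hd.deriv, hnum]
  have := three_mul_arcsin_lt hy0 hy1
  have : 0 < y / √(1 - y ^ 2) + 2 * y - 3 * arcsin y := by linarith
  positivity

lemma arcsin_sub_self_lt {x : ℝ} (hx0 : 0 < x) (hx1 : x < 1) :
    arcsin x - x < (π - 2) / 2 * x ^ 3 := by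
  have := strictMonoOn_arcsin_sub_self_div_cube ⟨hx0, hx1.le⟩ ⟨zero_lt_one, le_rfl⟩ hx1
  dsimp only at this
  rw [arcsin_one, div_lt_iff₀ (by positivity)] at this
  linarith

theorem discrete_wavenumber_bounds (k h : ℝ) (hk : 0 < k) (hh : 0 < h)
    (hkh : k * h / 2 < 1) :
    (1 / 24) * k ^ 3 * h ^ 2 < (2 / h) * Real.arcsin (k * h / 2) - k ∧
    (2 / h) * Real.arcsin (k * h / 2) - k < ((π - 2) / 8) * k ^ 3 * h ^ 2 := by
  have hx0 : 0 < k * h / 2 := by positivity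
  have hk_eq : 2 / h * (k * h / 2) = k := by field_simp
  have hcube_eq : 2 / h * (k * h / 2) ^ 3 = k ^ 3 * h ^ 2 / 4 := by field_simp; ring
  generalize k * h / 2 = x at *
  have hscale : 0 < 2 / h := by positivity
  constructor
  · have := mul_lt_mul_of_pos_left (add_cube_div_six_lt_arcsin hx0 hkh.le) hscale
    linear_combination this - hk_eq - hcube_eq / 6
  · have := mul_lt_mul_of_pos_left (arcsin_sub_self_lt hx0 hkh) hscale
    linear_combination this + hk_eq + (π - 2) / 2 * hcube_eq
end

section
/- Let k, k^h be reals with 0 < k < k^h, k^h − k < π/2, and suppose there is a positive integer n with (n−1)π < k < k^h < nπ. Define S₁ := (1/2)·sin(k^h−k)·(cot k − cot k^h) + cos(k^h−k) − sin(k^h−k)/(k^h−k). Then S₁ > (1/8)·(k^h−k)². -/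
/-!
Write `d = k^h - k`. Since `k` and `k^h` lie in the same interval `((n-1)π, nπ)`, `sin k sin k^h > 0`,
and `cot k - cot k^h = sin d / (sin k sin k^h)`. Product-to-sum gives
`2 sin k sin k^h = cos d - cos (k + k^h) ≤ 1 + cos d`, so the first term of `S₁` is at least
`sin² d / (1 + cos d) = 1 - cos d`. Hence `S₁ ≥ 1 - sin d / d`, and `sin d < d - d³/8` finishes.
-/

open Real Set

namespace Real

theorem cos_le_one_sub_sq_div_two_add_pow_four_div {x : ℝ} (hx₀ : 0 ≤ x) (hx : x ^ 2 ≤ 24) :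
    cos x ≤ 1 - x ^ 2 / 2 + x ^ 4 / 24 := by
  have hhalf : cos x = 1 - 2 * sin (x / 2) ^ 2 := by
    have h := cos_two_mul' (x / 2)
    rw [mul_div_cancel₀ x two_ne_zero] at h
    linear_combination h + sin_sq_add_cos_sq (x / 2)
  have hsin : x / 2 - (x / 2) ^ 3 / 6 ≤ sin (x / 2) := sin_ge_sub_cube (by positivity)
  have hcube_le : 0 ≤ x / 2 - (x / 2) ^ 3 / 6 := by nlinarith
  have hsq := pow_le_pow_left₀ hcube_le hsin 2
  nlinarith [pow_nonneg hx₀ 6]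

theorem sin_lt_sub_cube_div_eight {x : ℝ} (hx₀ : 0 < x) (hx : x ^ 2 ≤ 3) :
    sin x < x - x ^ 3 / 8 := by
  set f : ℝ → ℝ := fun y => y - y ^ 3 / 8 - sin y
  have hderiv (y : ℝ) : HasDerivAt f (1 - 3 * y ^ 2 / 8 - cos y) y := by
    refine (((hasDerivAt_id' y).sub ((hasDerivAt_pow 3 y).div_const 8)).sub
      (hasDerivAt_sin y)).congr_deriv ?_
    norm_num
  have hmono : StrictMonoOn f (Icc 0 √3) := by
    refine strictMonoOn_of_deriv_pos (convex_Icc 0 √3) (by fun_prop) fun y hy => ?_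
    rw [interior_Icc] at hy
    have hy3 : y ^ 2 < 3 := (lt_sqrt hy.1.le).1 hy.2
    have hcos := cos_le_one_sub_sq_div_two_add_pow_four_div hy.1.le (by linarith)
    -- `1 - 3y²/8 - cos y ≥ y²(3 - y²)/24`
    rw [(hderiv y).deriv]
    nlinarith [mul_pos (pow_pos hy.1 2) (sub_pos.2 hy3)]
  have hf := hmono ⟨le_rfl, sqrt_nonneg 3⟩ ⟨hx₀.le, (le_sqrt hx₀.le (by norm_num)).2 hx⟩ hx₀
  simpa [f, sub_pos] using hf

theorem cot_sub_cot {x y : ℝ} (hx : sin x ≠ 0) (hy : sin y ≠ 0) :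
    cot x - cot y = sin (y - x) / (sin x * sin y) := by
  rw [cot_eq_cos_div_sin, cot_eq_cos_div_sin, sin_sub]
  field_simp

theorem two_mul_sin_mul_sin_le_one_add_cos_sub (x y : ℝ) :
    2 * (sin x * sin y) ≤ 1 + cos (y - x) := by
  have : 2 * (sin x * sin y) = cos (y - x) - cos (y + x) := by
    rw [cos_sub, cos_add]; ring
  linarith [neg_one_le_cos (y + x)]

theorem sin_mul_sin_pos_of_mem_Ioo {x y : ℝ} (m : ℤ) (hx : x ∈ Ioo (m * π) ((m + 1) * π))
    (hy : y ∈ Ioo (m * π) ((m + 1) * π)) : 0 < sin x * sin y := by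
  have hx' := sin_pos_of_pos_of_lt_pi (x := x - m * π) (by linarith [hx.1]) (by linarith [hx.2])
  have hy' := sin_pos_of_pos_of_lt_pi (x := y - m * π) (by linarith [hy.1]) (by linarith [hy.2])
  have hsign : ((-1 : ℝ) ^ m) * (-1) ^ m = 1 := by rw [← mul_zpow]; norm_num
  rw [sin_sub_int_mul_pi] at hx' hy'
  calc 0 < (-1) ^ m * sin x * ((-1) ^ m * sin y) := mul_pos hx' hy'
    _ = sin x * sin y := by linear_combination (sin x * sin y) * hsign

theorem one_sub_cos_sub_le_half_sin_sub_mul_cot_sub_cot {x y : ℝ} (h : 0 < sin x * sin y) :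
    1 - cos (y - x) ≤ 1 / 2 * sin (y - x) * (cot x - cot y) := by
  rw [cot_sub_cot (left_ne_zero_of_mul h.ne') (right_ne_zero_of_mul h.ne')]
  have hprod := two_mul_sin_mul_sin_le_one_add_cos_sub x y
  have hcos := cos_le_one (y - x)
  have hsq := sin_sq_add_cos_sq (y - x)
  rw [show 1 / 2 * sin (y - x) * (sin (y - x) / (sin x * sin y))
      = sin (y - x) ^ 2 / (2 * (sin x * sin y)) by field_simp, le_div_iff₀ (by positivity)]
  -- `sin² (y - x) = (1 - cos (y - x)) (1 + cos (y - x))`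
  nlinarith [mul_le_mul_of_nonneg_left hprod (sub_nonneg.2 hcos)]

end Real

theorem S1_lower_bound_general (k kh : ℝ) (hkkh : k < kh)
    (hdiff : kh - k < π / 2) (n : ℕ)
    (h1 : ((n : ℝ) - 1) * π < k) (h2 : kh < (n : ℝ) * π) :
    (1 / 8) * (kh - k) ^ 2 <
      (1 / 2) * Real.sin (kh - k) * (Real.cot k - Real.cot kh)
        + Real.cos (kh - k) - Real.sin (kh - k) / (kh - k) := by
  set d := kh - k
  have hd : 0 < d := sub_pos.2 hkkh
  have hd3 : d ^ 2 ≤ 3 := by nlinarith [pi_lt_d2]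
  have hsin : sin d / d < 1 - d ^ 2 / 8 := by
    rw [div_lt_iff₀ hd]; nlinarith [sin_lt_sub_cube_div_eight hd hd3]
  have hIoo (x : ℝ) (hx₁ : ((n : ℝ) - 1) * π < x) (hx₂ : x < n * π) :
      x ∈ Ioo (((n - 1 : ℤ) : ℝ) * π) ((((n - 1 : ℤ) : ℝ) + 1) * π) := by
    push_cast; exact ⟨hx₁, by linarith⟩
  have hcot := one_sub_cos_sub_le_half_sin_sub_mul_cot_sub_cot <|
    sin_mul_sin_pos_of_mem_Ioo (n - 1) (hIoo k h1 (by linarith)) (hIoo kh (by linarith) h2)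
  linarith

theorem S1_lower_bound (k kh : ℝ) (hk : 0 < k) (hkkh : k < kh)
    (hdiff : kh - k < π / 2) (n : ℕ) (hn : 0 < n)
    (h1 : ((n : ℝ) - 1) * π < k) (h2 : kh < (n : ℝ) * π) :
    (1 / 8) * (kh - k) ^ 2 <
      (1 / 2) * Real.sin (kh - k) * (Real.cot k - Real.cot kh)
        + Real.cos (kh - k) - Real.sin (kh - k) / (kh - k) :=
  S1_lower_bound_general k kh hkkh hdiff n h1 h2
end

section
/- Let k, k^h be reals with 0 < k < k^h. Define S₂ := −(sin k^h)(cos k)/(2k) − (sin k)(cos k^h)/(2k^h) + sin(k+k^h)/(k+k^h). Then |S₂| < (1/(4k²) + 1/(4k³))·(k^h − k)². -/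
open Real

theorem S2_bound (k kh : ℝ) (hk : 0 < k) (hkkh : k < kh) :
    |(-(Real.sin kh * Real.cos k) / (2 * k) - Real.sin k * Real.cos kh / (2 * kh)
        + Real.sin (k + kh) / (k + kh))|
      < (1 / (4 * k ^ 2) + 1 / (4 * k ^ 3)) * (kh - k) ^ 2 := by
  have hkh : 0 < kh := hk.trans hkkh
  have hk0 : k ≠ 0 := ne_of_gt hk
  have hkh0 : kh ≠ 0 := ne_of_gt hkh
  have hsum : 0 < k + kh := by linarith
  have hsum0 : k + kh ≠ 0 := ne_of_gt hsum
  have hrw : (-(Real.sin kh * Real.cos k) / (2 * k) - Real.sin k * Real.cos kh / (2 * kh)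
        + Real.sin (k + kh) / (k + kh))
      = (kh - k) / (2 * (k + kh)) *
        (Real.sin (k - kh) / k + (k - kh) / (k * kh) * (Real.sin k * Real.cos kh)) := by
    rw [Real.sin_add, Real.sin_sub]
    field_simp
    ring
  rw [hrw, abs_mul]
  have hd : 0 < kh - k := by linarith
  have hfac : |(kh - k) / (2 * (k + kh))| = (kh - k) / (2 * (k + kh)) := by
    rw [abs_of_pos]; positivity
  rw [hfac]
  have hb1 : |Real.sin (k - kh) / k| ≤ (kh - k) / k := by
    rw [abs_div, abs_of_pos hk]
    gcongr
    calc |Real.sin (k - kh)| ≤ |k - kh| := Real.abs_sin_le_abs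
    _ = kh - k := by rw [abs_sub_comm, abs_of_pos hd]
  have hb2 : |(k - kh) / (k * kh) * (Real.sin k * Real.cos kh)| ≤ (kh - k) / (k * kh) := by
    have e : |(k - kh) / (k * kh)| = (kh - k) / (k * kh) := by
      rw [abs_div, abs_sub_comm, abs_of_pos hd, abs_of_pos (mul_pos hk hkh)]
    rw [abs_mul, e]
    have h1 : |Real.sin k * Real.cos kh| ≤ 1 := by
      rw [abs_mul]
      have := Real.abs_sin_le_one k
      have := Real.abs_cos_le_one kh
      nlinarith [abs_nonneg (Real.sin k), abs_nonneg (Real.cos kh)]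
    nlinarith [div_pos hd (mul_pos hk hkh), abs_nonneg (Real.sin k * Real.cos kh)]
  have hbr : |Real.sin (k - kh) / k + (k - kh) / (k * kh) * (Real.sin k * Real.cos kh)|
      ≤ (kh - k) / k + (kh - k) / (k * kh) :=
    (abs_add_le _ _).trans (add_le_add hb1 hb2)
  have hfinal : (kh - k) / (2 * (k + kh)) * ((kh - k) / k + (kh - k) / (k * kh))
      < (1 / (4 * k ^ 2) + 1 / (4 * k ^ 3)) * (kh - k) ^ 2 := by
    have e1 : (kh - k) / (2 * (k + kh)) * ((kh - k) / k + (kh - k) / (k * kh))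
        = (kh - k) ^ 2 * (kh + 1) / (2 * (k + kh) * k * kh) := by
      field_simp
    have e2 : (1 / (4 * k ^ 2) + 1 / (4 * k ^ 3)) * (kh - k) ^ 2
        = (kh - k) ^ 2 * (k + 1) / (4 * k ^ 3) := by
      field_simp
    rw [e1, e2, div_lt_div_iff₀ (by positivity) (by positivity)]
    nlinarith [mul_pos hk (mul_pos (mul_pos hd hd) (mul_pos (mul_pos hk hkh) hd)),
      mul_pos hk (mul_pos (mul_pos hd hd) (mul_pos hk hd)),
      mul_pos hk (mul_pos (mul_pos hd hd) (mul_pos hd hsum))]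
  calc (kh - k) / (2 * (k + kh)) * |Real.sin (k - kh) / k + (k - kh) / (k * kh) * (Real.sin k * Real.cos kh)|
      ≤ (kh - k) / (2 * (k + kh)) * ((kh - k) / k + (kh - k) / (k * kh)) := by
        apply mul_le_mul_of_nonneg_left hbr; positivity
    _ < _ := hfinal
end

section
/- For 0 < μ < 1 and θ_k := arcsin μ, the function φ_e(θ) := 1/(sin²θ − μ²) − 1/(θ² − μ²) has at most one critical point on (θ_k, π/2), and any critical point is a local minimum; consequently φ_e has no local maximum on (θ_k, π/2). -/
/-!
Writing `u = √θ`, `v = √(sin θ cos θ)`, `P = θ² - μ²` and `Q = sin² θ - μ²`, the derivative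
`2θ / P² - 2 sin θ cos θ / Q²` of `φ_e` factors as a positive multiple of `u Q - v P`, that is of
`w₋(θ) - μ²`. Since `w₋` is strictly increasing on `(0, π/2)`, `φ_e` has at most one critical point
there, decreases before it and increases after it.

The monotonicity of `w₋` reduces to the inequality
`4θ sc (√θ - √(sc))² < (sc - θ cos 2θ)(θ² - s²)` (with `s = sin θ`, `c = cos θ`), which is tight to
leading order `θ⁷` at `0`. Using `(√θ - √(sc))² (θ + 3sc) ≤ (θ - sc)²` and alternating Taylor
bounds of `sin 2θ` and `cos 2θ`, it becomes a polynomial inequality in `θ²` on `[0, 5/2]`, checked by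
bounding each monomial on three subintervals.
-/

open Real Set

noncomputable def sinTaylor (n : ℕ) (x : ℝ) : ℝ :=
  ∑ k ∈ Finset.range n, (-1) ^ k * x ^ (2 * k + 1) / (2 * k + 1).factorial

noncomputable def cosTaylor (n : ℕ) (x : ℝ) : ℝ :=
  ∑ k ∈ Finset.range n, (-1) ^ k * x ^ (2 * k) / (2 * k).factorial

theorem hasDerivAt_sinTaylor (n : ℕ) (x : ℝ) : HasDerivAt (sinTaylor n) (cosTaylor n x) x := by
  unfold sinTaylor cosTaylor
  refine HasDerivAt.fun_sum fun k _ => ?_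
  refine (((hasDerivAt_pow (2 * k + 1) x).const_mul ((-1 : ℝ) ^ k)).div_const
    ((2 * k + 1).factorial : ℝ)).congr_deriv ?_
  rw [Nat.factorial_succ, Nat.add_sub_cancel]
  push_cast
  field_simp

theorem hasDerivAt_cosTaylor_succ (n : ℕ) (x : ℝ) :
    HasDerivAt (cosTaylor (n + 1)) (-sinTaylor n x) x := by
  have h : cosTaylor (n + 1) = fun x : ℝ => 1 + ∑ k ∈ Finset.range n,
      (-1) ^ (k + 1) * x ^ (2 * k + 2) / (2 * k + 2).factorial := by
    funext x; simp [cosTaylor, Finset.sum_range_succ', Nat.mul_succ, add_comm]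
  rw [h, sinTaylor, ← Finset.sum_neg_distrib]
  refine (HasDerivAt.fun_sum fun k _ => ?_).const_add 1
  refine (((hasDerivAt_pow (2 * k + 2) x).const_mul ((-1 : ℝ) ^ (k + 1))).div_const
    ((2 * k + 2).factorial : ℝ)).congr_deriv ?_
  rw [Nat.factorial_succ, show 2 * k + 2 - 1 = 2 * k + 1 by omega]
  push_cast
  field_simp
  ring

theorem nonneg_of_hasDerivAt_of_nonneg {f f' : ℝ → ℝ} (hf : ∀ x, HasDerivAt f (f' x) x)
    (h₀ : f 0 = 0) (hf' : ∀ x, 0 ≤ x → 0 ≤ f' x) {x : ℝ} (hx : 0 ≤ x) : 0 ≤ f x := by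
  have hmono : MonotoneOn f (Ici 0) :=
    monotoneOn_of_deriv_nonneg (convex_Ici 0) (fun y _ => (hf y).continuousAt.continuousWithinAt)
      (fun y _ => (hf y).differentiableAt.differentiableWithinAt)
      (fun y hy => (hf y).deriv ▸ hf' y (interior_subset hy))
  exact h₀ ▸ hmono self_mem_Ici hx hx

theorem neg_one_pow_mul_sin_sub_sinTaylor_nonneg_of_cos {n : ℕ}
    (h : ∀ x, 0 ≤ x → 0 ≤ (-1) ^ n * (cos x - cosTaylor n x)) {x : ℝ} (hx : 0 ≤ x) :
    0 ≤ (-1) ^ n * (sin x - sinTaylor n x) :=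
  nonneg_of_hasDerivAt_of_nonneg
    (fun y => ((hasDerivAt_sin y).sub (hasDerivAt_sinTaylor n y)).const_mul _)
    (by simp [sinTaylor]) h hx

theorem neg_one_pow_mul_cos_sub_cosTaylor_succ_nonneg_of_sin {n : ℕ}
    (h : ∀ x, 0 ≤ x → 0 ≤ (-1) ^ n * (sin x - sinTaylor n x)) {x : ℝ} (hx : 0 ≤ x) :
    0 ≤ (-1) ^ (n + 1) * (cos x - cosTaylor (n + 1) x) :=
  nonneg_of_hasDerivAt_of_nonneg
    (fun y => ((hasDerivAt_cos y).sub (hasDerivAt_cosTaylor_succ n y)).const_mul _)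
    (by simp [cosTaylor, Finset.sum_range_succ']) (fun y hy => by convert h y hy using 1; ring) hx

theorem neg_one_pow_mul_cos_sub_cosTaylor_nonneg (n : ℕ) {x : ℝ} (hx : 0 ≤ x) :
    0 ≤ (-1) ^ (n + 1) * (cos x - cosTaylor (n + 1) x) := by
  induction n generalizing x with
  | zero => simpa [cosTaylor] using cos_le_one x
  | succ n ih =>
    exact neg_one_pow_mul_cos_sub_cosTaylor_succ_nonneg_of_sin
      (fun _ hy => neg_one_pow_mul_sin_sub_sinTaylor_nonneg_of_cos (fun _ hz => ih hz) hy) hx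

theorem neg_one_pow_mul_sin_sub_sinTaylor_nonneg (n : ℕ) {x : ℝ} (hx : 0 ≤ x) :
    0 ≤ (-1) ^ (n + 1) * (sin x - sinTaylor (n + 1) x) :=
  neg_one_pow_mul_sin_sub_sinTaylor_nonneg_of_cos
    (fun _ hy => neg_one_pow_mul_cos_sub_cosTaylor_nonneg n hy) hx

theorem sin_le_sinTaylor (n : ℕ) {x : ℝ} (hx : 0 ≤ x) : sin x ≤ sinTaylor (2 * n + 1) x := by
  have h := neg_one_pow_mul_sin_sub_sinTaylor_nonneg (2 * n) hx
  rwa [Odd.neg_one_pow ⟨n, rfl⟩, neg_one_mul, neg_nonneg, sub_nonpos] at h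

theorem sinTaylor_le_sin (n : ℕ) {x : ℝ} (hx : 0 ≤ x) : sinTaylor (2 * n + 2) x ≤ sin x := by
  have h := neg_one_pow_mul_sin_sub_sinTaylor_nonneg (2 * n + 1) hx
  rwa [Even.neg_one_pow ⟨n + 1, by ring⟩, one_mul, sub_nonneg] at h

theorem cos_le_cosTaylor (n : ℕ) {x : ℝ} (hx : 0 ≤ x) : cos x ≤ cosTaylor (2 * n + 1) x := by
  have h := neg_one_pow_mul_cos_sub_cosTaylor_nonneg (2 * n) hx
  rwa [Odd.neg_one_pow ⟨n, rfl⟩, neg_one_mul, neg_nonneg, sub_nonpos] at h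

theorem cosTaylor_le_cos (n : ℕ) {x : ℝ} (hx : 0 ≤ x) : cosTaylor (2 * n + 2) x ≤ cos x := by
  have h := neg_one_pow_mul_cos_sub_cosTaylor_nonneg (2 * n + 1) hx
  rwa [Even.neg_one_pow ⟨n + 1, by ring⟩, one_mul, sub_nonneg] at h

theorem sum_min_mul_pow_le {n : ℕ} (c : Fin n → ℝ) {a b t : ℝ} (ha : 0 ≤ a) (ht : t ∈ Icc a b) :
    ∑ i, min (c i * a ^ (i : ℕ)) (c i * b ^ (i : ℕ)) ≤ ∑ i, c i * t ^ (i : ℕ) := by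
  refine Finset.sum_le_sum fun i _ => ?_
  have hlo : a ^ (i : ℕ) ≤ t ^ (i : ℕ) := pow_le_pow_left₀ ha ht.1 _
  have hhi : t ^ (i : ℕ) ≤ b ^ (i : ℕ) := pow_le_pow_left₀ (ha.trans ht.1) ht.2 _
  rcases le_total 0 (c i) with hc | hc
  · exact (min_le_left _ _).trans (mul_le_mul_of_nonneg_left hlo hc)
  · exact (min_le_right _ _).trans (mul_le_mul_of_nonpos_left hhi hc)

theorem sum_mul_pow_pos_of_Icc {n : ℕ} (c : Fin n → ℝ) {t : ℝ} (ht : t ∈ Icc (0 : ℝ) (5 / 2))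
    (h₁ : 0 < ∑ i, min (c i * 0 ^ (i : ℕ)) (c i * 1 ^ (i : ℕ)))
    (h₂ : 0 < ∑ i, min (c i * 1 ^ (i : ℕ)) (c i * 2 ^ (i : ℕ)))
    (h₃ : 0 < ∑ i, min (c i * 2 ^ (i : ℕ)) (c i * (5 / 2) ^ (i : ℕ))) :
    0 < ∑ i, c i * t ^ (i : ℕ) := by
  rcases le_total t 1 with h1 | h1
  · exact h₁.trans_le (sum_min_mul_pow_le c le_rfl ⟨ht.1, h1⟩)
  rcases le_total t 2 with h2 | h2
  · exact h₂.trans_le (sum_min_mul_pow_le c zero_le_one ⟨h1, h2⟩)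
  · exact h₃.trans_le (sum_min_mul_pow_le c zero_le_two ⟨h2, ht.2⟩)

theorem sinTaylor_div_two_sub_mul_cosTaylor_pos {θ : ℝ} (h0 : 0 < θ) (hθ : θ ^ 2 ≤ 5 / 2) :
    0 < sinTaylor 4 (2 * θ) / 2 - θ * cosTaylor 5 (2 * θ) := by
  have := sum_mul_pow_pos_of_Icc ![4 / 3, -8 / 15, 8 / 105, -2 / 315] ⟨sq_nonneg θ, hθ⟩
    (by norm_num [Fin.sum_univ_succ, min_def]) (by norm_num [Fin.sum_univ_succ, min_def])
    (by norm_num [Fin.sum_univ_succ, min_def])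
  norm_num [Fin.sum_univ_succ, sinTaylor, cosTaylor, Finset.sum_range_succ, Nat.factorial] at this ⊢
  linarith [mul_pos (pow_pos h0 3) this]

theorem sq_sub_one_sub_cosTaylor_div_two_pos {θ : ℝ} (h0 : 0 < θ) (hθ : θ ^ 2 ≤ 5 / 2) :
    0 < θ ^ 2 - (1 - cosTaylor 4 (2 * θ)) / 2 := by
  norm_num [cosTaylor, Finset.sum_range_succ, Nat.factorial]
  linarith [mul_pos (pow_pos h0 4) (by linarith : (0 : ℝ) < 1 / 3 - 2 / 45 * θ ^ 2)]

theorem add_three_mul_sinTaylor_div_two_pos {θ : ℝ} (h0 : 0 < θ) (hθ : θ ^ 2 ≤ 5 / 2) : 0 < θ + 3 * sinTaylor 4 (2 * θ) / 2 := by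
  have := sum_mul_pow_pos_of_Icc ![4, -2, 2 / 5, -4 / 105] ⟨sq_nonneg θ, hθ⟩
    (by norm_num [Fin.sum_univ_succ, min_def]) (by norm_num [Fin.sum_univ_succ, min_def])
    (by norm_num [Fin.sum_univ_succ, min_def])
  norm_num [Fin.sum_univ_succ, sinTaylor, Finset.sum_range_succ, Nat.factorial] at this ⊢
  linarith [mul_pos h0 this]

theorem taylor_key_ineq {θ : ℝ} (h0 : 0 < θ) (hθ : θ ^ 2 ≤ 5 / 2) :
    2 * θ * sinTaylor 5 (2 * θ) * (θ - sinTaylor 4 (2 * θ) / 2) ^ 2 <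
      (sinTaylor 4 (2 * θ) / 2 - θ * cosTaylor 5 (2 * θ)) *
        (θ ^ 2 - (1 - cosTaylor 4 (2 * θ)) / 2) * (θ + 3 * sinTaylor 4 (2 * θ) / 2) := by
  have := sum_mul_pow_pos_of_Icc ![8 / 135, -8 / 4725, -8 / 945, 2084 / 893025, -604 / 4465125,
    -64 / 1913625, 656 / 93767625, -128 / 281302875] ⟨sq_nonneg θ, hθ⟩
    (by norm_num [Fin.sum_univ_succ, min_def]) (by norm_num [Fin.sum_univ_succ, min_def])
    (by norm_num [Fin.sum_univ_succ, min_def])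
  norm_num [Fin.sum_univ_succ, sinTaylor, cosTaylor, Finset.sum_range_succ, Nat.factorial] at this ⊢
  linarith [mul_pos (pow_pos h0 10) this]

theorem key_ineq_of_taylor_bounds {θ S C : ℝ} (h0 : 0 < θ) (hθ : θ ^ 2 ≤ 5 / 2) (hS : 0 < S)
    (hSθ : S < 2 * θ) (hS_lo : sinTaylor 4 (2 * θ) ≤ S) (hS_hi : S ≤ sinTaylor 5 (2 * θ))
    (hC_lo : cosTaylor 4 (2 * θ) ≤ C) (hC_hi : C ≤ cosTaylor 5 (2 * θ)) :
    2 * θ * S * (θ - S / 2) ^ 2 < (S / 2 - θ * C) * (θ ^ 2 - (1 - C) / 2) * (θ + 3 * S / 2) := by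
  have hA := sinTaylor_div_two_sub_mul_cosTaylor_pos h0 hθ
  have hW := sq_sub_one_sub_cosTaylor_div_two_pos h0 hθ
  have hT := add_three_mul_sinTaylor_div_two_pos h0 hθ
  have hθC : θ * C ≤ θ * cosTaylor 5 (2 * θ) := mul_le_mul_of_nonneg_left hC_hi h0.le
  calc 2 * θ * S * (θ - S / 2) ^ 2
      ≤ 2 * θ * sinTaylor 5 (2 * θ) * (θ - sinTaylor 4 (2 * θ) / 2) ^ 2 := by
        have : 0 ≤ 2 * θ * sinTaylor 5 (2 * θ) := mul_nonneg (by linarith) (hS.le.trans hS_hi)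
        gcongr
        linarith
    _ < (sinTaylor 4 (2 * θ) / 2 - θ * cosTaylor 5 (2 * θ)) *
          (θ ^ 2 - (1 - cosTaylor 4 (2 * θ)) / 2) * (θ + 3 * sinTaylor 4 (2 * θ) / 2) :=
        taylor_key_ineq h0 hθ
    _ ≤ (S / 2 - θ * C) * (θ ^ 2 - (1 - C) / 2) * (θ + 3 * S / 2) := by
        have : 0 ≤ S / 2 - θ * C := by linarith
        have : 0 ≤ θ ^ 2 - (1 - C) / 2 := by linarith
        gcongr

theorem sin_two_mul_key_ineq {θ : ℝ} (h0 : 0 < θ) (h2 : θ < π / 2) :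
    2 * θ * sin (2 * θ) * (θ - sin (2 * θ) / 2) ^ 2 <
      (sin (2 * θ) / 2 - θ * cos (2 * θ)) * (θ ^ 2 - (1 - cos (2 * θ)) / 2) *
        (θ + 3 * sin (2 * θ) / 2) := by
  have hx : 0 ≤ 2 * θ := by linarith
  exact key_ineq_of_taylor_bounds h0 (by nlinarith [pi_lt_d2])
    (sin_pos_of_pos_of_lt_pi (by linarith) (by linarith)) (sin_lt (by linarith))
    (sinTaylor_le_sin 1 hx) (sin_le_sinTaylor 2 hx) (cosTaylor_le_cos 1 hx) (cos_le_cosTaylor 2 hx)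

theorem sq_sqrt_sub_sqrt_mul_le {x y : ℝ} (hy : 0 ≤ y) (hyx : y ≤ x) :
    (√x - √y) ^ 2 * (x + 3 * y) ≤ (x - y) ^ 2 := by
  obtain ⟨u, hu, rfl⟩ : ∃ u, 0 ≤ u ∧ x = u ^ 2 := ⟨√x, sqrt_nonneg _, (sq_sqrt (hy.trans hyx)).symm⟩
  obtain ⟨v, hv, rfl⟩ : ∃ v, 0 ≤ v ∧ y = v ^ 2 := ⟨√y, sqrt_nonneg _, (sq_sqrt hy).symm⟩
  have hvu : v ≤ u := (pow_le_pow_iff_left₀ hv hu two_ne_zero).1 hyx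
  rw [sqrt_sq hu, sqrt_sq hv]
  nlinarith [mul_nonneg (mul_nonneg hv (sub_nonneg.2 hvu)) (sq_nonneg (u - v))]

theorem sin_mul_cos_mem_Ioo {θ : ℝ} (hθ : θ ∈ Ioo 0 (π / 2)) : sin θ * cos θ ∈ Ioo 0 θ := by
  have hs : 0 < sin θ := sin_pos_of_pos_of_lt_pi hθ.1 (by linarith [hθ.2, pi_pos])
  have hc : 0 < cos θ := cos_pos_of_mem_Ioo ⟨by linarith [hθ.1, pi_pos], hθ.2⟩
  exact ⟨mul_pos hs hc, by nlinarith [sin_lt hθ.1, cos_le_one θ]⟩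

theorem sin_mul_cos_mul_sq_sqrt_sub_sqrt_lt {θ : ℝ} (hθ : θ ∈ Ioo 0 (π / 2)) :
    4 * θ * (sin θ * cos θ) * (√θ - √(sin θ * cos θ)) ^ 2 <
      (sin θ * cos θ - θ * (cos θ ^ 2 - sin θ ^ 2)) * (θ ^ 2 - sin θ ^ 2) := by
  obtain ⟨hsc, hscθ⟩ := sin_mul_cos_mem_Ioo hθ
  have hkey := sin_two_mul_key_ineq hθ.1 hθ.2
  have hc2 : cos (2 * θ) = cos θ ^ 2 - sin θ ^ 2 := by
    rw [cos_two_mul]; linarith [sin_sq_add_cos_sq θ]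
  rw [sin_two_mul, hc2, show (1 - (cos θ ^ 2 - sin θ ^ 2)) / 2 = sin θ ^ 2 by
    linarith [sin_sq_add_cos_sq θ]] at hkey
  refine lt_of_mul_lt_mul_right (a := θ + 3 * (sin θ * cos θ)) ?_ (by linarith [hθ.1])
  calc 4 * θ * (sin θ * cos θ) * (√θ - √(sin θ * cos θ)) ^ 2 * (θ + 3 * (sin θ * cos θ))
      = 4 * θ * (sin θ * cos θ) * ((√θ - √(sin θ * cos θ)) ^ 2 * (θ + 3 * (sin θ * cos θ))) := by
        ring
    _ ≤ 4 * θ * (sin θ * cos θ) * (θ - sin θ * cos θ) ^ 2 := by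
        gcongr
        · exact mul_nonneg (by linarith [hθ.1]) hsc.le
        · exact sq_sqrt_sub_sqrt_mul_le hsc.le hscθ.le
    _ < _ := by convert hkey using 1 <;> ring

-- The paper's `w₋`, with numerator and denominator divided by `√θ + √(sin θ cos θ)`.
noncomputable def wMinus (θ : ℝ) : ℝ :=
  (√θ * sin θ ^ 2 - √(sin θ * cos θ) * θ ^ 2) / (√θ - √(sin θ * cos θ))

theorem hasDerivAt_wMinus {θ : ℝ} (hθ : θ ∈ Ioo 0 (π / 2)) :
    HasDerivAt wMinus (((sin θ * cos θ - θ * (cos θ ^ 2 - sin θ ^ 2)) * (θ ^ 2 - sin θ ^ 2) -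
      4 * θ * (sin θ * cos θ) * (√θ - √(sin θ * cos θ)) ^ 2) /
        (2 * √θ * √(sin θ * cos θ) * (√θ - √(sin θ * cos θ)) ^ 2)) θ := by
  obtain ⟨hsc, hscθ⟩ := sin_mul_cos_mem_Ioo hθ
  set u := √θ with hu_def
  set v := √(sin θ * cos θ) with hv_def
  have hu : u ^ 2 = θ := sq_sqrt hθ.1.le
  have hv : v ^ 2 = sin θ * cos θ := sq_sqrt hsc.le
  have hu0 : 0 < u := sqrt_pos.2 hθ.1
  have hv0 : 0 < v := sqrt_pos.2 hsc
  have huv : u - v ≠ 0 := (sub_pos.2 (sqrt_lt_sqrt hsc.le hscθ)).ne'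
  have hsqrt : HasDerivAt (fun x => √x) (1 / (2 * u)) θ := hasDerivAt_sqrt hθ.1.ne'
  have hsin2 : HasDerivAt (fun x => sin x ^ 2) (2 * (sin θ * cos θ)) θ :=
    ((hasDerivAt_sin θ).fun_pow 2).congr_deriv (by norm_num; ring)
  have hsc' : HasDerivAt (fun x => √(sin x * cos x)) ((cos θ ^ 2 - sin θ ^ 2) / (2 * v)) θ :=
    (((hasDerivAt_sin θ).fun_mul (hasDerivAt_cos θ)).sqrt hsc.ne').congr_deriv (by ring)
  have hsq : HasDerivAt (fun x : ℝ => x ^ 2) (2 * θ) θ :=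
    (hasDerivAt_pow 2 θ).congr_deriv (by norm_num)
  refine (((hsqrt.fun_mul hsin2).fun_sub (hsc'.fun_mul hsq)).fun_div
    (hsqrt.fun_sub hsc') huv).congr_deriv ?_
  rw [← hu_def, ← hv_def]
  clear_value u v
  generalize sin θ = s at *
  generalize cos θ = c at *
  subst hu
  rw [← hv]
  field_simp
  ring

theorem strictMonoOn_wMinus : StrictMonoOn wMinus (Ioo 0 (π / 2)) := by
  refine strictMonoOn_of_deriv_pos (convex_Ioo 0 (π / 2))
    (fun θ hθ => (hasDerivAt_wMinus hθ).continuousAt.continuousWithinAt) fun θ hθ => ?_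
  rw [interior_Ioo] at hθ
  obtain ⟨hsc, hscθ⟩ := sin_mul_cos_mem_Ioo hθ
  rw [(hasDerivAt_wMinus hθ).deriv]
  have : 0 < √θ - √(sin θ * cos θ) := sub_pos.2 (sqrt_lt_sqrt hsc.le hscθ)
  have := sqrt_pos.2 hθ.1
  have := sqrt_pos.2 hsc
  exact div_pos (sub_pos.2 (sin_mul_cos_mul_sq_sqrt_sub_sqrt_lt hθ)) (by positivity)

noncomputable def phiE (μ θ : ℝ) : ℝ := 1 / (sin θ ^ 2 - μ ^ 2) - 1 / (θ ^ 2 - μ ^ 2)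

theorem hasDerivAt_phiE {μ θ : ℝ} (hs : sin θ ^ 2 - μ ^ 2 ≠ 0) (hθ : θ ^ 2 - μ ^ 2 ≠ 0) :
    HasDerivAt (phiE μ)
      (2 * θ / (θ ^ 2 - μ ^ 2) ^ 2 - 2 * (sin θ * cos θ) / (sin θ ^ 2 - μ ^ 2) ^ 2) θ := by
  have h₁ : HasDerivAt (fun x => sin x ^ 2 - μ ^ 2) (2 * (sin θ * cos θ)) θ :=
    (((hasDerivAt_sin θ).fun_pow 2).sub_const _).congr_deriv (by norm_num; ring)
  have h₂ : HasDerivAt (fun x : ℝ => x ^ 2 - μ ^ 2) (2 * θ) θ :=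
    ((hasDerivAt_pow 2 θ).sub_const _).congr_deriv (by norm_num)
  refine (((hasDerivAt_const θ (1 : ℝ)).fun_div h₁ hs).fun_sub
    ((hasDerivAt_const θ (1 : ℝ)).fun_div h₂ hθ)).congr_deriv ?_
  ring

theorem lt_sin_of_mem_Ioo_arcsin {μ θ : ℝ} (hθ : θ ∈ Ioo (arcsin μ) (π / 2)) : μ < sin θ :=
  (arcsin_lt_iff_lt_sin' ⟨(neg_pi_div_two_le_arcsin μ).trans_lt hθ.1, hθ.2.le⟩).1 hθ.1

theorem mem_Ioo_zero_of_mem_Ioo_arcsin {μ θ : ℝ} (hμ : 0 < μ) (hθ : θ ∈ Ioo (arcsin μ) (π / 2)) :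
    θ ∈ Ioo 0 (π / 2) :=
  ⟨(arcsin_pos.2 hμ).trans hθ.1, hθ.2⟩

theorem hasDerivAt_phiE_eq_mul {μ θ : ℝ} (hμ : 0 < μ) (hθ : θ ∈ Ioo (arcsin μ) (π / 2)) :
    ∃ κ > 0, HasDerivAt (phiE μ) (κ * (wMinus θ - μ ^ 2)) θ := by
  have hθ₀ := mem_Ioo_zero_of_mem_Ioo_arcsin hμ hθ
  obtain ⟨hsc, hscθ⟩ := sin_mul_cos_mem_Ioo hθ₀
  have hμs := lt_sin_of_mem_Ioo_arcsin hθ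
  have hQ : 0 < sin θ ^ 2 - μ ^ 2 := by nlinarith
  have hP : 0 < θ ^ 2 - μ ^ 2 := by nlinarith [sin_lt hθ₀.1]
  set u := √θ with hu_def
  set v := √(sin θ * cos θ) with hv_def
  have hu : u ^ 2 = θ := sq_sqrt hθ₀.1.le
  have hv : v ^ 2 = sin θ * cos θ := sq_sqrt hsc.le
  have hu0 : 0 < u := sqrt_pos.2 hθ₀.1
  have hv0 : 0 < v := sqrt_pos.2 hsc
  have huv : 0 < u - v := sub_pos.2 (sqrt_lt_sqrt hsc.le hscθ)
  refine ⟨2 * (u - v) * (u * (sin θ ^ 2 - μ ^ 2) + v * (θ ^ 2 - μ ^ 2)) /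
    ((θ ^ 2 - μ ^ 2) ^ 2 * (sin θ ^ 2 - μ ^ 2) ^ 2), by positivity,
    (hasDerivAt_phiE hQ.ne' hP.ne').congr_deriv ?_⟩
  rw [wMinus, ← hu_def, ← hv_def]
  clear_value u v
  generalize sin θ = s at *
  generalize cos θ = c at *
  subst hu
  rw [← hv, div_sub_div _ _ (pow_ne_zero 2 hP.ne') (pow_ne_zero 2 hQ.ne'), div_sub' huv.ne',
    div_mul_div_comm, div_eq_div_iff (by positivity) (by positivity)]
  ring

theorem continuousOn_phiE {μ : ℝ} (hμ : 0 < μ) : ContinuousOn (phiE μ) (Ioo (arcsin μ) (π / 2)) :=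
  fun _ hθ => (hasDerivAt_phiE_eq_mul hμ hθ).choose_spec.2.continuousAt.continuousWithinAt

theorem strictAntiOn_phiE {μ θ : ℝ} (hμ : 0 < μ) (hθ : θ ∈ Ioo (arcsin μ) (π / 2))
    (hw : wMinus θ = μ ^ 2) : StrictAntiOn (phiE μ) (Ioc (arcsin μ) θ) := by
  refine strictAntiOn_of_deriv_neg (convex_Ioc _ _)
    ((continuousOn_phiE hμ).mono fun x hx => ⟨hx.1, hx.2.trans_lt hθ.2⟩) fun x hx => ?_
  rw [interior_Ioc] at hx
  have hxI : x ∈ Ioo (arcsin μ) (π / 2) := ⟨hx.1, hx.2.trans hθ.2⟩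
  obtain ⟨κ, hκ, hd⟩ := hasDerivAt_phiE_eq_mul hμ hxI
  have hwx : wMinus x < μ ^ 2 := hw ▸ strictMonoOn_wMinus
    (mem_Ioo_zero_of_mem_Ioo_arcsin hμ hxI) (mem_Ioo_zero_of_mem_Ioo_arcsin hμ hθ) hx.2
  rw [hd.deriv]
  exact mul_neg_of_pos_of_neg hκ (by linarith)

theorem strictMonoOn_phiE {μ θ : ℝ} (hμ : 0 < μ) (hθ : θ ∈ Ioo (arcsin μ) (π / 2))
    (hw : wMinus θ = μ ^ 2) : StrictMonoOn (phiE μ) (Ico θ (π / 2)) := by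
  refine strictMonoOn_of_deriv_pos (convex_Ico _ _)
    ((continuousOn_phiE hμ).mono fun x hx => ⟨hθ.1.trans_le hx.1, hx.2⟩) fun x hx => ?_
  rw [interior_Ico] at hx
  have hxI : x ∈ Ioo (arcsin μ) (π / 2) := ⟨hθ.1.trans hx.1, hx.2⟩
  obtain ⟨κ, hκ, hd⟩ := hasDerivAt_phiE_eq_mul hμ hxI
  have hwx : μ ^ 2 < wMinus x := hw ▸ strictMonoOn_wMinus
    (mem_Ioo_zero_of_mem_Ioo_arcsin hμ hθ) (mem_Ioo_zero_of_mem_Ioo_arcsin hμ hxI) hx.1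
  rw [hd.deriv]
  exact mul_pos hκ (by linarith)

theorem wMinus_eq_of_deriv_phiE_eq_zero {μ θ : ℝ} (hμ : 0 < μ)
    (hθ : θ ∈ Ioo (arcsin μ) (π / 2)) (h : deriv (phiE μ) θ = 0) : wMinus θ = μ ^ 2 := by
  obtain ⟨κ, hκ, hd⟩ := hasDerivAt_phiE_eq_mul hμ hθ
  rw [hd.deriv] at h
  linarith [(mul_eq_zero.1 h).resolve_left hκ.ne']

theorem phie_no_local_max_general (μ : ℝ) (hμ0 : 0 < μ) :
    (∀ θ₁ ∈ Set.Ioo (Real.arcsin μ) (π / 2), ∀ θ₂ ∈ Set.Ioo (Real.arcsin μ) (π / 2),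
        deriv (fun θ : ℝ => 1 / ((Real.sin θ) ^ 2 - μ ^ 2) - 1 / (θ ^ 2 - μ ^ 2)) θ₁ = 0 →
        deriv (fun θ : ℝ => 1 / ((Real.sin θ) ^ 2 - μ ^ 2) - 1 / (θ ^ 2 - μ ^ 2)) θ₂ = 0 →
        θ₁ = θ₂) ∧
    (∀ θ ∈ Set.Ioo (Real.arcsin μ) (π / 2),
        deriv (fun θ : ℝ => 1 / ((Real.sin θ) ^ 2 - μ ^ 2) - 1 / (θ ^ 2 - μ ^ 2)) θ = 0 →
        IsLocalMin (fun θ : ℝ => 1 / ((Real.sin θ) ^ 2 - μ ^ 2) - 1 / (θ ^ 2 - μ ^ 2)) θ) ∧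
    (∀ θ ∈ Set.Ioo (Real.arcsin μ) (π / 2),
        ¬ IsLocalMax (fun θ : ℝ => 1 / ((Real.sin θ) ^ 2 - μ ^ 2) - 1 / (θ ^ 2 - μ ^ 2)) θ) := by
  have hφ : (fun θ : ℝ => 1 / (sin θ ^ 2 - μ ^ 2) - 1 / (θ ^ 2 - μ ^ 2)) = phiE μ := rfl
  have hcrit := fun θ hθ h => wMinus_eq_of_deriv_phiE_eq_zero (θ := θ) hμ0 hθ h
  rw [hφ]
  refine ⟨fun θ₁ h₁ θ₂ h₂ hd₁ hd₂ => ?_, fun θ hθ hd => ?_, fun θ hθ hmax => ?_⟩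
  · exact strictMonoOn_wMinus.injOn (mem_Ioo_zero_of_mem_Ioo_arcsin hμ0 h₁)
      (mem_Ioo_zero_of_mem_Ioo_arcsin hμ0 h₂) ((hcrit θ₁ h₁ hd₁).trans (hcrit θ₂ h₂ hd₂).symm)
  · exact isLocalMin_of_anti_mono hθ.1 hθ.2
      (strictAntiOn_phiE hμ0 hθ (hcrit θ hθ hd)).antitoneOn
      (strictMonoOn_phiE hμ0 hθ (hcrit θ hθ hd)).monotoneOn
  · have hmono := strictMonoOn_phiE hμ0 hθ (hcrit θ hθ hmax.deriv_eq_zero)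
    obtain ⟨y, hy, hyI⟩ := ((hmax.filter_mono nhdsWithin_le_nhds).and (Ioo_mem_nhdsGT hθ.2)).exists
    exact (hmono ⟨le_rfl, hθ.2⟩ ⟨hyI.1.le, hyI.2⟩ hyI.1).not_ge hy

theorem phie_no_local_max (μ : ℝ) (hμ0 : 0 < μ) (hμ1 : μ < 1) :
    (∀ θ₁ ∈ Set.Ioo (Real.arcsin μ) (π / 2), ∀ θ₂ ∈ Set.Ioo (Real.arcsin μ) (π / 2),
        deriv (fun θ : ℝ => 1 / ((Real.sin θ) ^ 2 - μ ^ 2) - 1 / (θ ^ 2 - μ ^ 2)) θ₁ = 0 →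
        deriv (fun θ : ℝ => 1 / ((Real.sin θ) ^ 2 - μ ^ 2) - 1 / (θ ^ 2 - μ ^ 2)) θ₂ = 0 →
        θ₁ = θ₂) ∧
    (∀ θ ∈ Set.Ioo (Real.arcsin μ) (π / 2),
        deriv (fun θ : ℝ => 1 / ((Real.sin θ) ^ 2 - μ ^ 2) - 1 / (θ ^ 2 - μ ^ 2)) θ = 0 →
        IsLocalMin (fun θ : ℝ => 1 / ((Real.sin θ) ^ 2 - μ ^ 2) - 1 / (θ ^ 2 - μ ^ 2)) θ) ∧
    (∀ θ ∈ Set.Ioo (Real.arcsin μ) (π / 2),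
        ¬ IsLocalMax (fun θ : ℝ => 1 / ((Real.sin θ) ^ 2 - μ ^ 2) - 1 / (θ ^ 2 - μ ^ 2)) θ) :=
  phie_no_local_max_general μ hμ0
end

section
/- For 0 < μ < 1 and θ with arcsin μ < θ < π/2, define φ_e(θ) := 1/(sin²θ − μ²) − 1/(θ² − μ²). If θ_e ∈ (arcsin μ, π/2) is a critical point of φ_e (i.e. φ_e'(θ_e) = 0), then φ_e(θ_e) > 2/9. -/
/-!
Write `x = 2θ_e`, `A = sin²θ_e − μ²` and `B = θ_e² − μ²`. The critical-point equation reads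
`x A² = sin x · B²`, so `(B/A)² = x / sin x > 1 + x²/6` by the fifth-order Taylor bound for `sin`.
Hence `B/A > 1 + x²/18 = 1 + 2θ_e²/9`, and since `B < θ_e²`,
`φ_e(θ_e) = (B/A − 1)/B > (2θ_e²/9)/θ_e² = 2/9`.
-/

open Real

namespace Real

lemma cos_lt_one_sub_sq_div_two_add_pow_four_div {x : ℝ} (hx : x ≠ 0) :
    cos x < 1 - x ^ 2 / 2 + x ^ 4 / 24 := by
  wlog hx₀ : 0 < x
  · simpa [Even.neg_pow ⟨2, rfl⟩] using this (neg_ne_zero.2 hx) (by grind)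
  let f (t : ℝ) : ℝ := 1 - t ^ 2 / 2 + t ^ 4 / 24 - cos t
  have hderiv (t : ℝ) : deriv f t = sin t - (t - t ^ 3 / 6) := by
    simp (disch := fun_prop) [f]
    ring
  have hmono : StrictMonoOn f (Set.Ici 0) := by
    apply strictMonoOn_of_deriv_pos (convex_Ici 0) (by fun_prop)
    grind [sin_gt_sub_cube, interior_Ici]
  have h0 : f 0 < f x := hmono (by simp) hx₀.le hx₀
  grind [cos_zero]

lemma sin_lt_sub_cube_add_pow_five {x : ℝ} (hx : 0 < x) :
    sin x < x - x ^ 3 / 6 + x ^ 5 / 120 := by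
  let f (t : ℝ) : ℝ := t - t ^ 3 / 6 + t ^ 5 / 120 - sin t
  have hderiv (t : ℝ) : deriv f t = 1 - t ^ 2 / 2 + t ^ 4 / 24 - cos t := by
    simp (disch := fun_prop) [f]
    ring
  have hmono : StrictMonoOn f (Set.Ici 0) := by
    apply strictMonoOn_of_deriv_pos (convex_Ici 0) (by fun_prop)
    grind [cos_lt_one_sub_sq_div_two_add_pow_four_div, interior_Ici]
  have h0 : f 0 < f x := hmono (by simp) hx.le hx
  grind [sin_zero]

lemma sin_mul_six_add_sq_lt {x : ℝ} (hx : 0 < x) (hx14 : x ^ 2 ≤ 14) :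
    sin x * (6 + x ^ 2) < 6 * x :=
  calc sin x * (6 + x ^ 2) < (x - x ^ 3 / 6 + x ^ 5 / 120) * (6 + x ^ 2) :=
        mul_lt_mul_of_pos_right (sin_lt_sub_cube_add_pow_five hx) (by positivity)
    _ = 6 * x - x ^ 5 * (14 - x ^ 2) / 120 := by ring
    _ ≤ 6 * x := sub_le_self _ (by have := sub_nonneg.2 hx14; positivity)

end Real

lemma one_add_div_three_lt_of_one_add_lt_sq {y r : ℝ} (hr : 0 ≤ r) (hy₀ : 0 < y) (hy₃ : y < 3)
    (h : 1 + y < r ^ 2) : 1 + y / 3 < r :=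
  lt_of_pow_lt_pow_left₀ 2 hr (by nlinarith)

lemma critical_point_relation {μ θ : ℝ} (hA : sin θ ^ 2 - μ ^ 2 ≠ 0) (hB : θ ^ 2 - μ ^ 2 ≠ 0)
    (hcrit : deriv (fun θ : ℝ => 1 / (sin θ ^ 2 - μ ^ 2) - 1 / (θ ^ 2 - μ ^ 2)) θ = 0) :
    2 * θ * (sin θ ^ 2 - μ ^ 2) ^ 2 = sin (2 * θ) * (θ ^ 2 - μ ^ 2) ^ 2 := by
  have hderiv := ((((hasDerivAt_sin θ).pow 2).sub_const (μ ^ 2)).inv hA).sub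
    (((hasDerivAt_pow 2 θ).sub_const (μ ^ 2)).inv hB)
  simp only [one_div] at hcrit
  have hzero := hderiv.deriv.symm.trans hcrit
  simp only [Pi.pow_apply, Nat.cast_ofNat] at hzero
  field_simp at hzero
  rw [sin_two_mul]
  linear_combination hzero

lemma two_ninths_lt_inv_sub_inv {A B x : ℝ} (hA : 0 < A) (hB : 0 < B) (hx : 0 < x)
    (hx14 : x ^ 2 ≤ 14) (hBx : B < x ^ 2 / 4) (hrel : x * A ^ 2 = sin x * B ^ 2) :
    2 / 9 < 1 / A - 1 / B := by
  have hsin : 0 < sin x := pos_of_mul_pos_left (hrel ▸ by positivity) (sq_nonneg B)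
  have hsq : 1 + x ^ 2 / 6 < (B / A) ^ 2 := by
    rw [div_pow, lt_div_iff₀ (by positivity)]
    refine lt_of_mul_lt_mul_left ?_ hsin.le
    calc sin x * ((1 + x ^ 2 / 6) * A ^ 2) = sin x * (6 + x ^ 2) * A ^ 2 / 6 := by ring
      _ < 6 * x * A ^ 2 / 6 := by gcongr ?_ * _ / _; exact sin_mul_six_add_sq_lt hx hx14
      _ = sin x * B ^ 2 := by rw [← hrel]; ring
  have hratio := one_add_div_three_lt_of_one_add_lt_sq (div_pos hB hA).le (by positivity)
    (by linarith) hsq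
  calc 2 / 9 < (B / A - 1) / B := by rw [lt_div_iff₀ hB]; linarith
    _ = 1 / A - 1 / B := by field_simp

theorem phie_critical_value_lower_general (μ θe : ℝ) (hμ0 : 0 < μ)
    (hθ : θe ∈ Set.Ioo (Real.arcsin μ) (π / 2))
    (hcrit : deriv (fun θ : ℝ => 1 / ((Real.sin θ) ^ 2 - μ ^ 2) - 1 / (θ ^ 2 - μ ^ 2)) θe = 0) :
    2 / 9 < 1 / ((Real.sin θe) ^ 2 - μ ^ 2) - 1 / (θe ^ 2 - μ ^ 2) := by
  obtain ⟨hθ₁, hθ₂⟩ := hθ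
  have hθ₀ : 0 < θe := (arcsin_pos.2 hμ0).trans hθ₁
  have hμ_lt_sin : μ < sin θe :=
    (arcsin_lt_iff_lt_sin' ⟨by linarith [pi_pos], hθ₂.le⟩).1 hθ₁
  have hsin_lt : sin θe < θe := sin_lt hθ₀
  have hA : 0 < sin θe ^ 2 - μ ^ 2 := by nlinarith
  have hB : 0 < θe ^ 2 - μ ^ 2 := by nlinarith
  have hπ : (2 * θe) ^ 2 ≤ 14 := by nlinarith [pi_lt_d2]
  exact two_ninths_lt_inv_sub_inv hA hB (by positivity) hπ (by nlinarith)
    (critical_point_relation hA.ne' hB.ne' hcrit)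

theorem phie_critical_value_lower (μ θe : ℝ) (hμ0 : 0 < μ) (hμ1 : μ < 1)
    (hθ : θe ∈ Set.Ioo (Real.arcsin μ) (π / 2))
    (hcrit : deriv (fun θ : ℝ => 1 / ((Real.sin θ) ^ 2 - μ ^ 2) - 1 / (θ ^ 2 - μ ^ 2)) θe = 0) :
    2 / 9 < 1 / ((Real.sin θe) ^ 2 - μ ^ 2) - 1 / (θe ^ 2 - μ ^ 2) :=
  phie_critical_value_lower_general μ θe hμ0 hθ hcrit
end

section
/- Let 0 < μ < 1, and let v(θ) := (θ³ cos θ − sin³θ)/(θ cos θ − sin θ) for θ ∈ (0, π/2). Then v is strictly increasing on (0, π/2). -/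
/-!
Differentiating the quotient, `(θ cos θ - sin θ)² · v'(θ)` factors as
`(θ - sin θ)(θ + sin θ)(θ sin² θ + 3θ cos² θ - 3 sin θ cos θ)`. The first two factors are
positive, and so is the last: it vanishes at `0` and its derivative
`4 sin θ (sin θ - θ cos θ)` is positive on `(0, π)`, where `θ cos θ < sin θ`.
-/

open Real Set

lemma mul_cos_lt_sin {θ : ℝ} (h0 : 0 < θ) (hπ : θ < π) : θ * cos θ < sin θ := by
  rcases lt_or_ge θ (π / 2) with h1 | h1
  · have hcos : 0 < cos θ := cos_pos_of_mem_Ioo ⟨by linarith [pi_pos], h1⟩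
    have htan := lt_tan h0 h1
    rwa [tan_eq_sin_div_cos, lt_div_iff₀ hcos] at htan
  · have hcos : cos θ ≤ 0 := cos_nonpos_of_pi_div_two_le_of_le h1 (by linarith)
    nlinarith [sin_pos_of_pos_of_lt_pi h0 hπ]

lemma hasDerivAt_mul_sin_sq_add_three_mul_cos_sq_sub (θ : ℝ) :
    HasDerivAt (fun t ↦ t * sin t ^ 2 + 3 * t * cos t ^ 2 - 3 * sin t * cos t)
      (4 * sin θ * (sin θ - θ * cos θ)) θ := by
  have h := (((hasDerivAt_id' θ).fun_mul ((hasDerivAt_sin θ).fun_pow 2)).fun_add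
    (((hasDerivAt_id' θ).const_mul 3).fun_mul ((hasDerivAt_cos θ).fun_pow 2))).fun_sub
    (((hasDerivAt_sin θ).const_mul 3).fun_mul (hasDerivAt_cos θ))
  exact h.congr_deriv (by norm_num; ring)

lemma three_sin_mul_cos_lt {θ : ℝ} (h0 : 0 < θ) (hπ : θ ≤ π) :
    3 * sin θ * cos θ < θ * sin θ ^ 2 + 3 * θ * cos θ ^ 2 := by
  let g : ℝ → ℝ := fun t ↦ t * sin t ^ 2 + 3 * t * cos t ^ 2 - 3 * sin t * cos t
  have hg : StrictMonoOn g (Icc 0 θ) := by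
    refine strictMonoOn_of_deriv_pos (convex_Icc 0 θ) (by fun_prop) fun t ht ↦ ?_
    rw [interior_Icc] at ht
    have htπ : t < π := ht.2.trans_le hπ
    rw [(hasDerivAt_mul_sin_sq_add_three_mul_cos_sq_sub t).deriv]
    have hsin : 0 < sin t := sin_pos_of_pos_of_lt_pi ht.1 htπ
    have := mul_cos_lt_sin ht.1 htπ
    positivity
  have := hg (left_mem_Icc.2 h0.le) (right_mem_Icc.2 h0.le) h0
  simp only [g, sin_zero, cos_zero] at this
  linarith

lemma hasDerivAt_cube_mul_cos_sub_sin_cube_div {θ : ℝ} (hθ : θ * cos θ - sin θ ≠ 0) :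
    HasDerivAt (fun t ↦ (t ^ 3 * cos t - sin t ^ 3) / (t * cos t - sin t))
      ((θ - sin θ) * (θ + sin θ) * (θ * sin θ ^ 2 + 3 * θ * cos θ ^ 2 - 3 * sin θ * cos θ)
        / (θ * cos θ - sin θ) ^ 2) θ := by
  have hnum := (((hasDerivAt_id' θ).fun_pow 3).fun_mul (hasDerivAt_cos θ)).fun_sub
    ((hasDerivAt_sin θ).fun_pow 3)
  have hden := ((hasDerivAt_id' θ).fun_mul (hasDerivAt_cos θ)).fun_sub (hasDerivAt_sin θ)
  exact (hnum.fun_div hden hθ).congr_deriv (by norm_num; ring)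

theorem v_strictMono_general :
    StrictMonoOn
      (fun θ : ℝ => (θ ^ 3 * Real.cos θ - (Real.sin θ) ^ 3) /
        (θ * Real.cos θ - Real.sin θ))
      (Set.Ioo 0 (π / 2)) := by
  have hπ : ∀ θ ∈ Ioo 0 (π / 2), θ < π := fun θ hθ ↦ hθ.2.trans (half_lt_self pi_pos)
  have hden : ∀ θ ∈ Ioo 0 (π / 2), θ * cos θ - sin θ < 0 := fun θ hθ ↦ by
    linarith [mul_cos_lt_sin hθ.1 (hπ θ hθ)]
  refine strictMonoOn_of_deriv_pos (convex_Ioo 0 (π / 2))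
    (ContinuousOn.div (by fun_prop) (by fun_prop) fun θ hθ ↦ (hden θ hθ).ne) fun θ hθ ↦ ?_
  rw [interior_Ioo] at hθ
  rw [(hasDerivAt_cube_mul_cos_sub_sin_cube_div (hden θ hθ).ne).deriv]
  have hsin_lt : sin θ < θ := sin_lt hθ.1
  have hsin_pos : 0 < sin θ := sin_pos_of_pos_of_lt_pi hθ.1 (hπ θ hθ)
  have hfactor := three_sin_mul_cos_lt hθ.1 (hπ θ hθ).le
  have : 0 < (θ - sin θ) * (θ + sin θ) *
      (θ * sin θ ^ 2 + 3 * θ * cos θ ^ 2 - 3 * sin θ * cos θ) :=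
    mul_pos (mul_pos (by linarith) (by linarith)) (by linarith)
  exact div_pos this (sq_pos_of_neg (hden θ hθ))

theorem v_strictMono (μ : ℝ) (hμ0 : 0 < μ) (hμ1 : μ < 1) :
    StrictMonoOn
      (fun θ : ℝ => (θ ^ 3 * Real.cos θ - (Real.sin θ) ^ 3) /
        (θ * Real.cos θ - Real.sin θ))
      (Set.Ioo 0 (π / 2)) :=
  v_strictMono_general
end
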